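/- arXiv:2205.09711 — 5 statements merged into one kernel-verified Lean document; each statement's English description precedes it below -/
import Mathlib

section
/- Let R, B, E be nonempty finite types and let ψ : R × B × E → ℂ be a unit vector (∑_{r,b,e} |ψ(r,b,e)|² = 1). Let λ : R → ℝ and μ : E → ℝ be nonnegative. Suppose the partial trace of |ψ⟩⟨ψ| over B is the product of the diagonal matrices with entries λ and μ, i.e. for all r, r', e, e': ∑_b ψ(r,b,e) · conj(ψ(r',b,e')) = λ(r)·μ(e) if r = r' and e = e', and 0 otherwise. Then there exists a family φ : R → E → (B → ℂ) such that ψ(r,b,e) = √(λ(r)·μ(e)) · φ(r)(e)(b) for all r, b, e, and the vectors φ(r)(e) with λ(r)·μ(e) ≠ 0 form an orthonormal family: for any such (r,e), (r',e'), ∑_b φ(r)(e)(b) · conj(φ(r')(e')(b)) equals 1 if (r,e) = (r',e') and 0 otherwise. -/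
/-!
The decoupling condition says that the vectors `ψ (r, ·, e) ∈ ℂ^B` are pairwise orthogonal with
squared norms `λ r * μ e`. Normalising the nonzero ones gives the orthonormal family `φ`; the
vectors of norm zero vanish, so they have the required form for any `φ r e`.
-/

open Matrix
open scoped ComplexConjugate ComplexOrder

theorem nonneg_of_dotProduct_self_star_eq_ofReal {𝕜 B : Type*} [RCLike 𝕜] [Fintype B]
    {v : B → 𝕜} {d : ℝ} (h : v ⬝ᵥ star v = d) : 0 ≤ d := by
  have := dotProduct_self_star_nonneg v
  rwa [h, RCLike.ofReal_nonneg] at this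

theorem exists_orthonormal_smul_of_dotProduct_star_eq_ite {ι B 𝕜 : Type*} [RCLike 𝕜]
    [Fintype B] [DecidableEq ι] {v : ι → B → 𝕜} {d : ι → ℝ}
    (hv : ∀ i j, v i ⬝ᵥ star (v j) = if i = j then (d i : 𝕜) else 0) :
    ∃ φ : ι → B → 𝕜, (∀ i, v i = (√(d i) : 𝕜) • φ i) ∧
      ∀ i j, d i ≠ 0 → d j ≠ 0 → φ i ⬝ᵥ star (φ j) = if i = j then 1 else 0 := by
  have hd : ∀ i, 0 ≤ d i := fun i =>
    nonneg_of_dotProduct_self_star_eq_ofReal (by simpa using hv i i)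
  -- where `d i = 0` the factor `(√0)⁻¹` is the junk value `0`, so `φ i = 0`
  refine ⟨fun i => ((√(d i))⁻¹ : 𝕜) • v i, fun i => ?_, fun i j hi hj => ?_⟩
  · by_cases h0 : d i = 0
    · have : v i = 0 := dotProduct_self_star_eq_zero.1 (by simpa [h0] using hv i i)
      simp [this]
    · have : (√(d i) : 𝕜) ≠ 0 := by
        exact_mod_cast (Real.sqrt_pos.2 ((hd i).lt_of_ne' h0)).ne'
      rw [smul_smul, mul_inv_cancel₀ this, one_smul]
  · rw [star_smul, smul_dotProduct, dotProduct_smul, hv, star_inv₀, RCLike.star_def,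
      RCLike.conj_ofReal, smul_eq_mul, smul_eq_mul]
    split_ifs with hij
    · subst hij
      rw [← mul_assoc, ← mul_inv, ← RCLike.ofReal_mul, Real.mul_self_sqrt (hd i),
        inv_mul_cancel₀ (RCLike.ofReal_ne_zero.2 hi)]
    · simp

theorem decoupling_schmidt_form_general
    (R B E : Type) [Fintype B]
    [DecidableEq R] [DecidableEq E]
    (ψ : R × B × E → ℂ)
    (lam : R → ℝ) (mu : E → ℝ)
    (hdec : ∀ r r' : R, ∀ e e' : E,
      ∑ b : B, ψ (r, b, e) * conj (ψ (r', b, e'))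
        = if r = r' ∧ e = e' then ((lam r * mu e : ℝ) : ℂ) else 0) :
    ∃ φ : R → E → B → ℂ,
      (∀ r b e, ψ (r, b, e) = (Real.sqrt (lam r * mu e) : ℂ) * φ r e b) ∧
      (∀ r e r' e', lam r * mu e ≠ 0 → lam r' * mu e' ≠ 0 →
        ∑ b : B, φ r e b * conj (φ r' e' b)
          = if (r, e) = (r', e') then (1 : ℂ) else 0) := by
  obtain ⟨φ, hψφ, hφ⟩ := exists_orthonormal_smul_of_dotProduct_star_eq_ite
    (v := fun (i : R × E) b => ψ (i.1, b, i.2)) (d := fun i => lam i.1 * mu i.2)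
    fun i j => by simp_rw [Prod.ext_iff]; exact hdec i.1 j.1 i.2 j.2
  exact ⟨fun r e => φ (r, e), fun r b e => congr_fun (hψφ (r, e)) b,
    fun r e r' e' => hφ (r, e) (r', e')⟩

/-- **Decoupling implies Schmidt form.**
If the reduced state of a tripartite pure state `ψ` on `R × B × E` after tracing out `B`
is the product of diagonal states `λ` on `R` and `μ` on `E`, then `ψ` has the Schmidt form
`ψ(r,b,e) = √(λ r · μ e) · φ r e b` with `(φ r e)` an orthonormal family wherever
`λ r · μ e ≠ 0`. -/
theorem decoupling_schmidt_form
    (R B E : Type) [Fintype R] [Fintype B] [Fintype E]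
    [DecidableEq R] [DecidableEq E]
    [Nonempty R] [Nonempty B] [Nonempty E]
    (ψ : R × B × E → ℂ)
    (hψ : ∑ r : R, ∑ b : B, ∑ e : E, ‖ψ (r, b, e)‖ ^ 2 = 1)
    (lam : R → ℝ) (mu : E → ℝ)
    (hlam : ∀ r, 0 ≤ lam r) (hmu : ∀ e, 0 ≤ mu e)
    (hdec : ∀ r r' : R, ∀ e e' : E,
      ∑ b : B, ψ (r, b, e) * conj (ψ (r', b, e'))
        = if r = r' ∧ e = e' then ((lam r * mu e : ℝ) : ℂ) else 0) :
    ∃ φ : R → E → B → ℂ,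
      (∀ r b e, ψ (r, b, e) = (Real.sqrt (lam r * mu e) : ℂ) * φ r e b) ∧
      (∀ r e r' e', lam r * mu e ≠ 0 → lam r' * mu e' ≠ 0 →
        ∑ b : B, φ r e b * conj (φ r' e' b)
          = if (r, e) = (r', e') then (1 : ℂ) else 0) :=
  decoupling_schmidt_form_general R B E ψ lam mu hdec
end

section
/- Let R, B, E be nonempty finite types, ι : R ↪ B an injection, and ψ : R × B × E → ℂ a unit vector. Let λ : R → ℝ and μ : E → ℝ be nonnegative, and suppose that for all r, r', e, e': ∑_b ψ(r,b,e) · conj(ψ(r',b,e')) = λ(r)·μ(e) if r = r' and e = e', and 0 otherwise. Then for every e ∈ E with μ(e) ≠ 0 there exists a unitary matrix V ∈ U(B) (Matrix.unitaryGroup B ℂ) such that for all r ∈ R and b ∈ B: ∑_{b'} V(b, b') · ψ(r, b', e) = √(λ(r)·μ(e)) if b = ι(r), and 0 otherwise. In other words, after a projective measurement on B with outcome flagged by e, a local unitary correction V on B transforms the post-measurement state into the maximally correlated state ∑_r √(λ(r)) |r⟩_R |ι(r)⟩_B, so all entanglement between R and the input is recovered on RB. -/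
open Matrix
open scoped ComplexConjugate InnerProductSpace

/-!
For a fixed outcome `e`, decoupling says that the vectors `ψ (r, ·, e) ∈ ℂ^B` are pairwise
orthogonal with squared norms `λ r * μ e`. Normalising the nonzero ones and extending them to an
orthonormal basis `(b k)` of `ℂ^B` with `b (ι r)` parallel to `ψ (r, ·, e)`, the unitary taking
coordinates in the basis `b` maps `ψ (r, ·, e)` to `√(λ r μ e)` times the basis vector at `ι r`.
-/

section

variable {𝕜 E ι κ : Type*} [RCLike 𝕜] [NormedAddCommGroup E] [InnerProductSpace 𝕜 E]

theorem exists_orthonormalBasis_smul_eq_of_pairwise_inner_eq_zero [FiniteDimensional 𝕜 E]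
    [Fintype κ] (hcard : Module.finrank 𝕜 E = Fintype.card κ) {v : ι → E}
    (hv : Pairwise fun i j => ⟪v i, v j⟫_𝕜 = 0) (f : ι ↪ κ) :
    ∃ b : OrthonormalBasis κ 𝕜 E, ∀ i, v i = (‖v i‖ : 𝕜) • b (f i) := by
  classical
  set u : ι → E := fun i => (‖v i‖ : 𝕜)⁻¹ • v i
  have hu : Orthonormal 𝕜 ((f '' {i | v i ≠ 0}).domRestrict (Function.extend f u 0)) := by
    constructor
    · rintro ⟨_, i, hi, rfl⟩
      simp [f.injective.extend_apply, u, norm_smul, norm_ne_zero_iff.mpr hi]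
    · rintro ⟨_, i, hi, rfl⟩ ⟨_, j, hj, rfl⟩ hne
      have hij : i ≠ j := fun h => hne (by subst h; rfl)
      simp [f.injective.extend_apply, u, inner_smul_left, inner_smul_right, hv hij]
  obtain ⟨b, hb⟩ := hu.exists_orthonormalBasis_extension_of_card_eq hcard
  refine ⟨b, fun i => ?_⟩
  by_cases hi : v i = 0
  · simp [hi]
  · rw [hb (f i) ⟨i, hi, rfl⟩, f.injective.extend_apply]
    simp [u, smul_smul, norm_ne_zero_iff.mpr hi]

theorem Matrix.exists_mem_unitaryGroup_mulVec_eq_single [Fintype κ] [DecidableEq κ]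
    {v : ι → EuclideanSpace 𝕜 κ} (hv : Pairwise fun i j => ⟪v i, v j⟫_𝕜 = 0) (f : ι ↪ κ) :
    ∃ V ∈ unitaryGroup κ 𝕜, ∀ i, V *ᵥ (v i).ofLp = Pi.single (f i) (‖v i‖ : 𝕜) := by
  obtain ⟨b, hb⟩ := exists_orthonormalBasis_smul_eq_of_pairwise_inner_eq_zero
    (finrank_euclideanSpace (𝕜 := 𝕜) (ι := κ)) hv f
  refine ⟨b.toBasis.toMatrix (EuclideanSpace.basisFun κ 𝕜),
    b.toMatrix_orthonormalBasis_mem_unitary _, fun i => ?_⟩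
  have h := (EuclideanSpace.basisFun κ 𝕜).toBasis.toMatrix_mulVec_repr b.toBasis (v i)
  rw [OrthonormalBasis.coe_toBasis] at h
  change _ *ᵥ (v i).ofLp = _ at h
  ext k
  rw [h, b.coe_toBasis_repr_apply]
  conv_lhs => rw [hb i]
  rw [map_smul, b.repr_self]
  simp [Pi.single_apply, RCLike.real_smul_eq_coe_mul]

end

theorem decoupling_entanglement_recovery_general
    (R B E : Type) [Fintype R] [Fintype B] [Fintype E]
    [DecidableEq R] [DecidableEq B] [DecidableEq E]
    (ι : R ↪ B)
    (ψ : R × B × E → ℂ)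
    (lam : R → ℝ) (mu : E → ℝ)
    (hdec : ∀ r r' : R, ∀ e e' : E,
      ∑ b : B, ψ (r, b, e) * conj (ψ (r', b, e'))
        = if r = r' ∧ e = e' then ((lam r * mu e : ℝ) : ℂ) else 0) :
    ∀ e : E, mu e ≠ 0 →
      ∃ V ∈ Matrix.unitaryGroup B ℂ,
        ∀ r : R, ∀ b : B,
          ∑ b' : B, V b b' * ψ (r, b', e)
            = if b = ι r then (Real.sqrt (lam r * mu e) : ℂ) else 0 := by
  intro e _
  set v : R → EuclideanSpace ℂ B := fun r => WithLp.toLp 2 fun b => ψ (r, b, e)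
  have hinner (r r' : R) : ⟪v r', v r⟫_ℂ = if r = r' then ((lam r * mu e : ℝ) : ℂ) else 0 := by
    refine (EuclideanSpace.inner_toLp_toLp _ _).trans ?_
    simp only [dotProduct, Pi.star_apply, RCLike.star_def, hdec, and_true]
  have hnorm (r : R) : ‖v r‖ = √(lam r * mu e) := by
    have h : ‖v r‖ ^ 2 = lam r * mu e := by
      rw [← inner_self_eq_norm_sq (𝕜 := ℂ), hinner, if_pos rfl]
      exact Complex.ofReal_re _
    rw [← h, Real.sqrt_sq (norm_nonneg _)]
  obtain ⟨V, hV, hVv⟩ := Matrix.exists_mem_unitaryGroup_mulVec_eq_single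
    (fun r r' hrr' => by simpa [hrr'.symm] using hinner r' r) ι
  refine ⟨V, hV, fun r b => ?_⟩
  calc ∑ b' : B, V b b' * ψ (r, b', e) = (V *ᵥ (v r).ofLp) b := rfl
    _ = _ := by
      rw [hVv, hnorm, Pi.single_apply, RCLike.ofReal_eq_complex_ofReal]

/-- **Decoupling implies perfect entanglement recovery** ('if' direction of the
decoupling theorem). If the reference `R` and environment `E` are decoupled
(`ρ_{RE} = ρ_R ⊗ ρ_E` with diagonal spectra `λ`, `μ`), then for every measurement
outcome `e` with `μ e ≠ 0` there is a unitary correction `V` on `B` mapping the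
post-measurement state to the maximally correlated state `∑ r √(λ r) |r⟩|ι r⟩`. -/
theorem decoupling_entanglement_recovery
    (R B E : Type) [Fintype R] [Fintype B] [Fintype E]
    [DecidableEq R] [DecidableEq B] [DecidableEq E]
    [Nonempty R] [Nonempty B] [Nonempty E]
    (ι : R ↪ B)
    (ψ : R × B × E → ℂ)
    (hψ : ∑ r : R, ∑ b : B, ∑ e : E, ‖ψ (r, b, e)‖ ^ 2 = 1)
    (lam : R → ℝ) (mu : E → ℝ)
    (hlam : ∀ r, 0 ≤ lam r) (hmu : ∀ e, 0 ≤ mu e)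
    (hdec : ∀ r r' : R, ∀ e e' : E,
      ∑ b : B, ψ (r, b, e) * conj (ψ (r', b, e'))
        = if r = r' ∧ e = e' then ((lam r * mu e : ℝ) : ℂ) else 0) :
    ∀ e : E, mu e ≠ 0 →
      ∃ V ∈ Matrix.unitaryGroup B ℂ,
        ∀ r : R, ∀ b : B,
          ∑ b' : B, V b b' * ψ (r, b', e)
            = if b = ι r then (Real.sqrt (lam r * mu e) : ℂ) else 0 :=
  decoupling_entanglement_recovery_general R B E ι ψ lam mu hdec
end

section
/- Let d ≥ 1 and let A : Matrix (Fin d) (Fin d) ℂ be any matrix. Then ∫ U, U · A · Uᴴ dμ_d = (trace(A) / d) • 1, where 1 is the d×d identity matrix. In particular, averaging any density matrix over the full unitary group yields the maximally mixed state (1/d) • 1. -/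
/-!
Left invariance of the Haar measure makes `M = ∫ U A Uᴴ dμ` invariant under conjugation by every
unitary, so `M` commutes with all unitary matrices. These span the full matrix algebra (every
element of a unital C⋆-algebra is a combination of four unitaries), hence `M` is central, i.e. a
scalar matrix. Its trace is `tr A`, since each integrand has trace `tr A` and `μ` is a probability
measure, which pins the scalar to `tr A / d`.
-/

open MeasureTheory Matrix

noncomputable section

attribute [local instance] Matrix.normedAddCommGroup Matrix.normedSpace

local instance {d : ℕ} : MeasurableSpace (Matrix.unitaryGroup (Fin d) ℂ) := borel _

namespace Matrix

variable {n : Type*} [Fintype n] [DecidableEq n]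

open scoped Matrix.Norms.L2Operator in
theorem mem_range_scalar_of_forall_commute_unitary {M : Matrix n n ℂ}
    (hM : ∀ U ∈ unitaryGroup n ℂ, Commute U M) : M ∈ Set.range (scalar n) := by
  have hspan : Submodule.span ℂ (unitary (Matrix n n ℂ) : Set (Matrix n n ℂ)) ≤
      (Subalgebra.centralizer ℂ {M}).toSubmodule :=
    Submodule.span_le.2 fun U hU => (Subalgebra.mem_centralizer_iff ℂ).2 fun _ h => by
      rw [Set.mem_singleton_iff.1 h]
      exact (hM U hU).eq.symm
  refine mem_range_scalar_of_commute_single fun i j _ => ?_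
  have hij : single i j 1 ∈ Subalgebra.centralizer ℂ {M} :=
    hspan (CStarAlgebra.span_unitary (Matrix n n ℂ) ▸ Submodule.mem_top)
  exact ((Subalgebra.mem_centralizer_iff ℂ).1 hij M rfl).symm

theorem eq_trace_div_card_smul_one_of_mem_range_scalar {R : Type*} [Field R] [CharZero R]
    {M : Matrix n n R} (hM : M ∈ Set.range (scalar n)) :
    M = (M.trace / Fintype.card n) • (1 : Matrix n n R) := by
  obtain ⟨c, rfl⟩ := hM
  cases isEmpty_or_nonempty n
  · exact Subsingleton.elim _ _
  · rw [scalar_apply, trace_diagonal, Finset.sum_const, Finset.card_univ, nsmul_eq_mul,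
      mul_div_cancel_left₀ _ (Nat.cast_ne_zero.2 Fintype.card_ne_zero), smul_one_eq_diagonal]

theorem isCompact_unitaryGroup : IsCompact (unitaryGroup n ℂ : Set (Matrix n n ℂ)) := by
  have hclosed : IsClosed (unitaryGroup n ℂ : Set (Matrix n n ℂ)) := isClosed_unitary
  exact Metric.isCompact_of_isClosed_isBounded hclosed <|
    isBounded_iff_forall_norm_le.2 ⟨1, fun _ => entrywise_sup_norm_bound_of_unitary⟩

instance : CompactSpace (unitaryGroup n ℂ) :=
  isCompact_iff_compactSpace.1 isCompact_unitaryGroup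

instance {d : ℕ} : BorelSpace (unitaryGroup (Fin d) ℂ) := ⟨rfl⟩

namespace UnitaryGroup

variable (A : Matrix n n ℂ)

theorem continuous_conj :
    Continuous fun U : unitaryGroup n ℂ => (U : Matrix n n ℂ) * A * (U : Matrix n n ℂ)ᴴ :=
  (continuous_subtype_val.matrix_mul continuous_const).matrix_mul
    continuous_subtype_val.matrix_conjTranspose

variable [MeasurableSpace (unitaryGroup n ℂ)] [BorelSpace (unitaryGroup n ℂ)]
  (μ : Measure (unitaryGroup n ℂ))

theorem commute_integral_conj [μ.IsMulLeftInvariant] (V : unitaryGroup n ℂ) :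
    Commute (V : Matrix n n ℂ) (∫ U, (U : Matrix n n ℂ) * A * (U : Matrix n n ℂ)ᴴ ∂μ) := by
  set f := fun U : unitaryGroup n ℂ => (U : Matrix n n ℂ) * A * (U : Matrix n n ℂ)ᴴ
  let L := (Unitary.conjStarAlgAut ℂ _ V).toAlgEquiv.toLinearEquiv.toContinuousLinearEquiv
  have hinv : V * (∫ U, f U ∂μ) * star (V : Matrix n n ℂ) = ∫ U, f U ∂μ := calc
    _ = ∫ U, L (f U) ∂μ := (L.integral_comp_comm _).symm
    _ = ∫ U, f (V * U) ∂μ := by simp [L, f, mul_assoc, star_eq_conjTranspose]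
    _ = ∫ U, f U ∂μ := integral_mul_left_eq_self f V
  calc V * ∫ U, f U ∂μ = V * (∫ U, f U ∂μ) * (star (V : Matrix n n ℂ) * V) := by
        rw [UnitaryGroup.star_mul_self, mul_one]
    _ = (∫ U, f U ∂μ) * V := by rw [← mul_assoc, hinv]

theorem trace_integral_conj [IsProbabilityMeasure μ] :
    (∫ U, (U : Matrix n n ℂ) * A * (U : Matrix n n ℂ)ᴴ ∂μ).trace = A.trace := by
  let L := LinearMap.toContinuousLinearMap (traceLinearMap n ℂ ℂ)
  have hint := (continuous_conj A).integrable_of_hasCompactSupport (μ := μ) (.of_compactSpace _)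
  calc _ = ∫ U, L ((U : Matrix n n ℂ) * A * (U : Matrix n n ℂ)ᴴ) ∂μ :=
        (L.integral_comp_comm hint).symm
    _ = ∫ _, A.trace ∂μ := by
        congr 1
        ext1 U
        simp only [L, LinearMap.coe_toContinuousLinearMap', traceLinearMap_apply]
        rw [trace_mul_cycle, ← star_eq_conjTranspose, UnitaryGroup.star_mul_self, one_mul]
    _ = A.trace := by simp

end UnitaryGroup

end Matrix

theorem haar_average_conjugation_general (d : ℕ)
    (A : Matrix (Fin d) (Fin d) ℂ)
    (μ : Measure (Matrix.unitaryGroup (Fin d) ℂ))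
    [μ.IsHaarMeasure] [IsProbabilityMeasure μ] :
    ∫ U : Matrix.unitaryGroup (Fin d) ℂ,
        (U : Matrix (Fin d) (Fin d) ℂ) * A * (U : Matrix (Fin d) (Fin d) ℂ)ᴴ ∂μ
      = (A.trace / (d : ℂ)) • (1 : Matrix (Fin d) (Fin d) ℂ) := by
  have hscalar := mem_range_scalar_of_forall_commute_unitary fun V hV =>
    UnitaryGroup.commute_integral_conj A μ ⟨V, hV⟩
  rw [eq_trace_div_card_smul_one_of_mem_range_scalar hscalar, UnitaryGroup.trace_integral_conj,
    Fintype.card_fin]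

/-- Averaging `U A Uᴴ` over the Haar probability measure on the unitary group
yields the maximally mixed multiple of the identity, `(tr A / d) • 1`. -/
theorem haar_average_conjugation (d : ℕ) (hd : 1 ≤ d)
    (A : Matrix (Fin d) (Fin d) ℂ)
    (μ : Measure (Matrix.unitaryGroup (Fin d) ℂ))
    [μ.IsHaarMeasure] [IsProbabilityMeasure μ] :
    ∫ U : Matrix.unitaryGroup (Fin d) ℂ,
        (U : Matrix (Fin d) (Fin d) ℂ) * A * (U : Matrix (Fin d) (Fin d) ℂ)ᴴ ∂μ
      = (A.trace / (d : ℂ)) • (1 : Matrix (Fin d) (Fin d) ℂ) :=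
  haar_average_conjugation_general d A μ
end
end

section
/- Let p : ℕ → ℝ be a probability distribution (p n ≥ 0 for all n and ∑' n, p n = 1) with ∑' n, p n · |log₂ (p n)| < ∞, and let H = −∑' n, p n · log₂ (p n) (with the convention 0·log₂ 0 = 0). Fix ε > 0. For K ∈ ℕ, let the ε-typical set be T(K, ε) = { x : Fin K → ℕ | |−(1/K) · ∑_{i < K} log₂ (p (x i)) − H| ≤ ε } (restricted to strings with p(x i) > 0 for all i). Then the probability of the typical set under the K-fold product distribution tends to 1: the net K ↦ ∑'_{x ∈ T(K,ε)} ∏_{i < K} p (x i) converges to 1 as K → ∞. -/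
/-!
Under the product of copies of `p`, the letters of a random string are i.i.d., so the values
`-log₂ p (xᵢ)` are i.i.d. random variables, integrable with mean `H` by the summability
hypothesis. Realising all `K`-fold products as marginals of one infinite product measure, the
strong law of large numbers gives almost sure, hence in-probability, convergence of the empirical
mean `-(1/K) ∑ log₂ p (xᵢ)` to `H`; this is the claim. Strings containing a letter of probability
zero have weight zero, so the positivity restriction does not change the sum.
-/

open Filter MeasureTheory ProbabilityTheory
open scoped ENNReal Topology

noncomputable section

section WeakLaw

variable {α : Type*} [MeasurableSpace α]

theorem MeasureTheory.Measure.pi_fin_eq_map_infinitePi (μ : Measure α) [IsProbabilityMeasure μ]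
    (K : ℕ) :
    Measure.pi (fun _ : Fin K => μ) =
      (Measure.infinitePi fun _ : ℕ => μ).map (fun ω (i : Fin K) => ω i) := by
  rw [Measure.map_infinitePi_infinitePi_of_inj Fin.val_injective, Measure.infinitePi_eq_pi]

variable {μ : Measure α} [IsProbabilityMeasure μ] {f : α → ℝ}

theorem ProbabilityTheory.tendstoInMeasure_average_infinitePi (hf_meas : Measurable f)
    (hf : Integrable f μ) :
    TendstoInMeasure (Measure.infinitePi fun _ : ℕ => μ)
      (fun n ω => (∑ i ∈ Finset.range n, f (ω i)) / n) atTop (fun _ => ∫ a, f a ∂μ) := by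
  set P := Measure.infinitePi fun _ : ℕ => μ
  have hX : ∀ i, MeasurePreserving (fun ω : ℕ → α => ω i) P μ :=
    measurePreserving_eval_infinitePi _
  have hident : ∀ i, IdentDistrib (fun ω : ℕ → α => f (ω i)) (fun ω => f (ω 0)) P P := fun i =>
    IdentDistrib.comp ⟨(hX i).aemeasurable, (hX 0).aemeasurable, by
      rw [(hX i).map_eq, (hX 0).map_eq]⟩ hf_meas
  have hindep : iIndepFun (fun i (ω : ℕ → α) => f (ω i)) P :=
    iIndepFun_infinitePi fun _ => hf_meas
  have hlaw := strong_law_ae_real (fun i (ω : ℕ → α) => f (ω i))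
    ((hX 0).integrable_comp_of_integrable hf) (fun i j hij => hindep.indepFun hij) hident
  rw [← integral_map (hX 0).aemeasurable hf_meas.aestronglyMeasurable, (hX 0).map_eq] at hlaw
  exact tendstoInMeasure_of_tendsto_ae
    (fun n => Measurable.aestronglyMeasurable (by fun_prop)) hlaw

theorem ProbabilityTheory.tendsto_measureReal_pi_abs_average_sub_integral_le
    (hf_meas : Measurable f) (hf : Integrable f μ) {ε : ℝ} (hε : 0 < ε) :
    Tendsto (fun K : ℕ => (Measure.pi fun _ : Fin K => μ).real
      {x | |(∑ i, f (x i)) / K - ∫ a, f a ∂μ| ≤ ε}) atTop (𝓝 1) := by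
  have hT : ∀ K : ℕ, MeasurableSet {x : Fin K → α | |(∑ i, f (x i)) / K - ∫ a, f a ∂μ| ≤ ε} :=
    fun K => measurableSet_le (by fun_prop) measurable_const
  suffices Tendsto (fun K : ℕ => (Measure.pi fun _ : Fin K => μ).real
      {x | |(∑ i, f (x i)) / K - ∫ a, f a ∂μ| ≤ ε}ᶜ) atTop (𝓝 0) by
    simpa [probReal_compl_eq_one_sub (hT _)] using this.const_sub 1
  refine squeeze_zero (fun _ => measureReal_nonneg) (fun K => ?_)
    (tendstoInMeasure_iff_measureReal_dist.mp (tendstoInMeasure_average_infinitePi hf_meas hf) ε hε)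
  rw [Measure.pi_fin_eq_map_infinitePi, map_measureReal_apply (by fun_prop) (hT K).compl]
  refine measureReal_mono fun ω hω => ?_
  simp only [Set.mem_preimage, Set.mem_compl_iff, Set.mem_ofPred_eq, not_le] at hω
  simpa [Real.dist_eq, Fin.sum_univ_eq_sum_range (fun i => f (ω i))] using hω.le

end WeakLaw

section DiscreteMeasure

variable {α : Type*} [MeasurableSpace α] {p : α → ℝ}

def discreteMeasure (p : α → ℝ) : Measure α :=
  Measure.sum fun a => ENNReal.ofReal (p a) • Measure.dirac a

theorem discreteMeasure_singleton [MeasurableSingletonClass α] (a : α) :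
    discreteMeasure p {a} = ENNReal.ofReal (p a) := by
  classical
  simp [discreteMeasure, Measure.sum_apply _ (measurableSet_singleton a), Set.indicator_apply]

theorem isProbabilityMeasure_discreteMeasure (hp : ∀ a, 0 ≤ p a) (hsum : ∑' a, p a = 1) :
    IsProbabilityMeasure (discreteMeasure p) := by
  have hsummable : Summable p := by
    by_contra h
    simp [tsum_eq_zero_of_not_summable h] at hsum
  constructor
  simp [discreteMeasure, ← ENNReal.ofReal_tsum_of_nonneg hp hsummable, hsum]

variable [MeasurableSingletonClass α] [Countable α]

theorem integrable_discreteMeasure (hp : ∀ a, 0 ≤ p a) {g : α → ℝ}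
    (hg : Summable fun a => p a * |g a|) : Integrable g (discreteMeasure p) :=
  integrable_sum_dirac (fun _ => ENNReal.ofReal_ne_top) (by simpa [ENNReal.toReal_ofReal (hp _)])

theorem integral_discreteMeasure (hp : ∀ a, 0 ≤ p a) {g : α → ℝ}
    (hg : Summable fun a => p a * |g a|) :
    ∫ a, g a ∂discreteMeasure p = ∑' a, p a * g a := by
  rw [discreteMeasure, integral_sum_dirac_eq_tsum (fun _ => ENNReal.ofReal_ne_top)
    (by simpa [ENNReal.toReal_ofReal (hp _)])]
  simp [ENNReal.toReal_ofReal (hp _)]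

theorem measureReal_pi_discreteMeasure {ι : Type*} [Fintype ι] (hp : ∀ a, 0 ≤ p a)
    (hsum : ∑' a, p a = 1) (s : Set (ι → α)) :
    (Measure.pi fun _ : ι => discreteMeasure p).real s = ∑' x : s, ∏ i, p (x.1 i) := by
  have := isProbabilityMeasure_discreteMeasure hp hsum
  have hsingle : ∀ x : ι → α, (Measure.pi fun _ : ι => discreteMeasure p) {x} =
      ENNReal.ofReal (∏ i, p (x i)) := by
    intro x
    rw [Measure.pi_singleton, ENNReal.ofReal_prod_of_nonneg fun i _ => hp (x i)]
    simp [discreteMeasure_singleton]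
  have hsum_singleton : (Measure.pi fun _ : ι => discreteMeasure p) s =
      ∑' x : s, (Measure.pi fun _ : ι => discreteMeasure p) {x.1} := by
    simpa using (tsum_measure_preimage_singleton (μ := Measure.pi fun _ : ι => discreteMeasure p)
      s.to_countable (f := id) fun _ _ => measurableSet_singleton _).symm
  rw [measureReal_def, hsum_singleton, ENNReal.tsum_toReal_eq fun x => by simp [hsingle]]
  simp [hsingle, Finset.prod_nonneg fun i _ => hp _]

end DiscreteMeasure

theorem tsum_subtype_and_eq_of_support_subset {β M : Type*} [AddCommMonoid M] [TopologicalSpace M]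
    {q r : β → Prop} {g : β → M} (hg : Function.support g ⊆ {x | q x}) :
    ∑' x : {x // q x ∧ r x}, g x = ∑' x : {x // r x}, g x :=
  calc ∑' x : {x // q x ∧ r x}, g x = ∑' x, {x | q x ∧ r x}.indicator g x := tsum_subtype _ g
    _ = ∑' x, {x | r x}.indicator g x := by
      conv_rhs => rw [← Set.indicator_eq_self.mpr hg, Set.indicator_indicator, Set.inter_comm]
      rfl
    _ = ∑' x : {x // r x}, g x := (tsum_subtype _ g).symm

-- `Real.logb 2 0 = 0`, so the convention `0 · log₂ 0 = 0` is built in.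
/-- **Asymptotic equipartition property**: the probability of the ε-typical set
under the K-fold product distribution tends to 1 as K → ∞. (Note that in Lean,
`Real.logb 2 0 = 0`, so the convention `0·log₂ 0 = 0` is automatic.) -/
theorem typical_set_probability_tendsto_one
    (p : ℕ → ℝ) (hp : ∀ n, 0 ≤ p n) (hsum : ∑' n, p n = 1)
    (hfin : Summable fun n => p n * |Real.logb 2 (p n)|)
    (H : ℝ) (hH : H = -∑' n, p n * Real.logb 2 (p n))
    (ε : ℝ) (hε : 0 < ε) :
    Tendsto
      (fun K : ℕ =>
        ∑' x : {x : Fin K → ℕ //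
            (∀ i, 0 < p (x i)) ∧
            |(-(1 / (K : ℝ))) * (∑ i : Fin K, Real.logb 2 (p (x i))) - H| ≤ ε},
          ∏ i : Fin K, p (x.1 i))
      atTop (nhds 1) := by
  have := isProbabilityMeasure_discreteMeasure hp hsum
  set f : ℕ → ℝ := fun n => -Real.logb 2 (p n)
  have hf : Summable fun n => p n * |f n| := by simpa [f, abs_neg] using hfin
  have hf_integral : ∫ n, f n ∂discreteMeasure p = H := by
    rw [integral_discreteMeasure hp hf, hH, ← tsum_neg]
    simp [f]
  have hlaw := tendsto_measureReal_pi_abs_average_sub_integral_le (measurable_of_countable f)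
    (integrable_discreteMeasure hp hf) hε
  rw [hf_integral] at hlaw
  refine hlaw.congr fun K => ?_
  have htypical : {x : Fin K → ℕ | |(∑ i, f (x i)) / K - H| ≤ ε} =
      {x | |(-(1 / (K : ℝ))) * (∑ i, Real.logb 2 (p (x i))) - H| ≤ ε} := by
    simp only [f, Finset.sum_neg_distrib, neg_div, neg_mul, one_div_mul_eq_div]
  have hprod_pos : Function.support (fun x : Fin K → ℕ => ∏ i, p (x i)) ⊆
      {x | ∀ i, 0 < p (x i)} := fun x hx i =>
    (hp _).lt_of_ne' fun h => hx (Finset.prod_eq_zero (Finset.mem_univ i) h)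
  rw [htypical, measureReal_pi_discreteMeasure hp hsum]
  exact (tsum_subtype_and_eq_of_support_subset hprod_pos).symm
end
end

section
/- Let r > 0 and define p : ℕ → ℝ by p n = tanh(r)^(2n) / cosh(r)^2. Then ∑' n, p n = 1 and −∑' n, p n · log₂ (p n) = cosh(r)^2 · log₂ (cosh(r)^2) − sinh(r)^2 · log₂ (sinh(r)^2). -/
/-! With `s = sinh² r` the Schmidt coefficients are `qⁿ / (s + 1)` with `q = s / (s + 1)`,
the Bose–Einstein distribution of mean `s`. Its normalization is the geometric series, and
its entropy follows from `∑ n qⁿ = q / (1 - q)²`, which after `1 - q = 1 / (s + 1)` collapses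
to `(s + 1) log (s + 1) − s log s`. Since `cosh² r = sinh² r + 1`, this is `E(r)`. -/

open Real

noncomputable def boseEinstein (s : ℝ) (n : ℕ) : ℝ := (s / (s + 1)) ^ n / (s + 1)

theorem pow_div_mul_logb_pow_div (b x : ℝ) {c : ℝ} (hc : c ≠ 0) (n : ℕ) :
    x ^ n / c * logb b (x ^ n / c) = x ^ n / c * (n * logb b x - logb b c) := by
  rcases eq_or_ne (x ^ n) 0 with h | h
  · simp [h]
  · rw [logb_div h hc, logb_pow]

section BoseEinstein

variable {s : ℝ} (hs : 0 ≤ s)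
include hs

theorem norm_div_add_one_lt_one : ‖s / (s + 1)‖ < 1 := by
  rw [norm_of_nonneg (by positivity), div_lt_one (by positivity)]
  linarith

theorem one_sub_div_add_one : 1 - s / (s + 1) = (s + 1)⁻¹ := by
  field_simp; ring

theorem hasSum_pow_div_add_one : HasSum (fun n : ℕ ↦ (s / (s + 1)) ^ n) (s + 1) := by
  simpa [one_sub_div_add_one hs] using
    hasSum_geometric_of_norm_lt_one (norm_div_add_one_lt_one hs)

theorem hasSum_coe_mul_pow_div_add_one :
    HasSum (fun n : ℕ ↦ n * (s / (s + 1)) ^ n) (s * (s + 1)) := by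
  have hsum : s / (s + 1) / (1 - s / (s + 1)) ^ 2 = s * (s + 1) := by
    rw [one_sub_div_add_one hs]
    field_simp
  exact hsum ▸ hasSum_coe_mul_geometric_of_norm_lt_one (norm_div_add_one_lt_one hs)

theorem hasSum_boseEinstein : HasSum (boseEinstein s) 1 := by
  have h := (hasSum_pow_div_add_one hs).div_const (s + 1)
  rwa [div_self (by positivity)] at h

theorem hasSum_boseEinstein_mul_logb (b : ℝ) :
    HasSum (fun n ↦ boseEinstein s n * logb b (boseEinstein s n))
      (s * logb b s - (s + 1) * logb b (s + 1)) := by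
  have hs₁ : s + 1 ≠ 0 := by positivity
  have hterm : ∀ n : ℕ, boseEinstein s n * logb b (boseEinstein s n)
      = logb b (s / (s + 1)) / (s + 1) * (n * (s / (s + 1)) ^ n)
        - logb b (s + 1) / (s + 1) * (s / (s + 1)) ^ n := fun n ↦ by
    rw [boseEinstein, pow_div_mul_logb_pow_div b _ hs₁]; ring
  have hlog : s * logb b (s / (s + 1)) = s * (logb b s - logb b (s + 1)) := by
    rcases eq_or_ne s 0 with h | h
    · simp [h]
    · rw [logb_div h hs₁]
  have hvalue : s * logb b s - (s + 1) * logb b (s + 1)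
      = logb b (s / (s + 1)) / (s + 1) * (s * (s + 1)) - logb b (s + 1) / (s + 1) * (s + 1) := by
    field_simp
    linear_combination -hlog
  rw [funext hterm, hvalue]
  exact ((hasSum_coe_mul_pow_div_add_one hs).mul_left _).sub
    ((hasSum_pow_div_add_one hs).mul_left _)

end BoseEinstein

theorem tanh_pow_two_mul_div_cosh_sq (r : ℝ) (n : ℕ) :
    tanh r ^ (2 * n) / cosh r ^ 2 = boseEinstein (sinh r ^ 2) n := by
  rw [boseEinstein, ← cosh_sq, pow_mul, tanh_eq_sinh_div_cosh, div_pow]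

theorem tmsv_entropy_general (r : ℝ) :
    (∑' n : ℕ, Real.tanh r ^ (2 * n) / Real.cosh r ^ 2) = 1 ∧
    -(∑' n : ℕ, (Real.tanh r ^ (2 * n) / Real.cosh r ^ 2) *
        Real.logb 2 (Real.tanh r ^ (2 * n) / Real.cosh r ^ 2))
      = Real.cosh r ^ 2 * Real.logb 2 (Real.cosh r ^ 2)
        - Real.sinh r ^ 2 * Real.logb 2 (Real.sinh r ^ 2) := by
  have hs : 0 ≤ sinh r ^ 2 := sq_nonneg _
  simp only [tanh_pow_two_mul_div_cosh_sq]
  rw [cosh_sq r]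
  refine ⟨(hasSum_boseEinstein hs).tsum_eq, ?_⟩
  rw [(hasSum_boseEinstein_mul_logb hs 2).tsum_eq]
  ring

/-- The Schmidt distribution `p n = tanh(r)^(2n) / cosh(r)²` of the two-mode
squeezed vacuum is normalized and its Shannon entropy equals the entanglement
entropy `E(r) = cosh²(r) log₂ cosh²(r) − sinh²(r) log₂ sinh²(r)`. -/
theorem tmsv_entropy (r : ℝ) (hr : 0 < r) :
    (∑' n : ℕ, Real.tanh r ^ (2 * n) / Real.cosh r ^ 2) = 1 ∧
    -(∑' n : ℕ, (Real.tanh r ^ (2 * n) / Real.cosh r ^ 2) *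
        Real.logb 2 (Real.tanh r ^ (2 * n) / Real.cosh r ^ 2))
      = Real.cosh r ^ 2 * Real.logb 2 (Real.cosh r ^ 2)
        - Real.sinh r ^ 2 * Real.logb 2 (Real.sinh r ^ 2) :=
  tmsv_entropy_general r
end
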